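/- arXiv:1501.04216 — 2 statements merged into one kernel-verified Lean document; each statement's English description precedes it below -/
import Mathlib

section
/- Every matrix r ∈ SO(3) whose characteristic polynomial is (x² − (4 − 2√2)x + 1)(x − 1) has infinite order in SO(3). -/
/-!
An eigenvalue `z ∈ ℂ` of `r` satisfies `z + z⁻¹ = 4 - 2√2`, so if `r ^ n = 1` then `z ^ n = 1` and
the Dickson polynomial `Dₙ ∈ ℤ[X]`, for which `Dₙ (z + z⁻¹) = zⁿ + z⁻ⁿ`, takes the value `2` at
`4 - 2√2`. Evaluating in `ℤ[√2]`, where `√2 ↦ -√2` is a ring embedding into `ℝ` as well, `Dₙ` also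
takes the value `2` at the Galois conjugate `4 + 2√2 = x + x⁻¹` with `x > 1` real. But there
`Dₙ (x + x⁻¹) = xⁿ + x⁻ⁿ > 2`.
-/

/-- `SO(3)`: the subgroup of the real orthogonal group `O(3)` of matrices of determinant 1. -/
def SO3 : Subgroup (Matrix.unitaryGroup (Fin 3) ℝ) where
  carrier := {A | (A : Matrix (Fin 3) (Fin 3) ℝ).det = 1}
  one_mem' := by simp
  mul_mem' := by
    intro a b ha hb
    simp only [Set.mem_setOf_eq, Matrix.UnitaryGroup.mul_val, Matrix.det_mul] at *
    rw [ha, hb, one_mul]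
  inv_mem' := by
    intro a ha
    simp only [Set.mem_setOf_eq, Matrix.UnitaryGroup.inv_val] at *
    rw [Matrix.star_eq_conjTranspose, Matrix.conjTranspose_eq_transpose_of_trivial,
      Matrix.det_transpose]
    exact ha

open Polynomial

theorem Zsqrtd.aeval_lift_eq_of_aeval_lift_eq {R : Type*} [CommRing R] [CharZero R] {d : ℤ}
    (hd : ∀ n : ℤ, d ≠ n * n) (r s : { r : R // r * r = ↑d }) (p : ℤ[X]) (z : ℤ√d) (m : ℤ)
    (h : aeval (lift r z) p = m) : aeval (lift s z) p = m := by
  have hz : aeval z p = m := by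
    apply lift_injective r hd
    rw [map_intCast, ← h]
    exact (aeval_algHom_apply (lift r).toIntAlgHom z p).symm
  rw [← map_intCast (lift s) m, ← hz]
  exact aeval_algHom_apply (lift s).toIntAlgHom z p

theorem Real.exists_one_lt_add_inv_eq {c : ℝ} (hc : 2 < c) : ∃ x : ℝ, 1 < x ∧ x + x⁻¹ = c := by
  have hs : √(c ^ 2 - 4) * √(c ^ 2 - 4) = c ^ 2 - 4 := Real.mul_self_sqrt (by nlinarith)
  have hs0 : 0 < √(c ^ 2 - 4) := Real.sqrt_pos.mpr (by nlinarith)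
  have hprod : (c + √(c ^ 2 - 4)) / 2 * ((c - √(c ^ 2 - 4)) / 2) = 1 := by
    linear_combination -hs / 4
  refine ⟨(c + √(c ^ 2 - 4)) / 2, by linarith, ?_⟩
  rw [inv_eq_of_mul_eq_one_right hprod]
  ring

theorem Complex.exists_add_inv_eq (c : ℂ) : ∃ z : ℂ, z ≠ 0 ∧ z + z⁻¹ = c := by
  obtain ⟨s, hs⟩ := IsAlgClosed.exists_eq_mul_self (c ^ 2 - 4)
  have hprod : (c + s) / 2 * ((c - s) / 2) = 1 := by linear_combination hs / 4
  refine ⟨(c + s) / 2, left_ne_zero_of_mul_eq_one hprod, ?_⟩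
  rw [inv_eq_of_mul_eq_one_right hprod]
  ring

theorem aeval_dickson_one_one {R : Type*} [CommRing R] (x : R) (n : ℕ) :
    aeval x (dickson 1 (1 : ℤ) n) = (dickson 1 (1 : R) n).eval x := by
  rw [aeval_def, ← eval_map, map_dickson, map_one]

theorem two_lt_eval_dickson_add_inv {x : ℝ} (hx : 1 < x) {n : ℕ} (hn : n ≠ 0) :
    2 < (dickson 1 (1 : ℝ) n).eval (x + x⁻¹) := by
  rw [dickson_one_one_eval_add_inv x x⁻¹ (mul_inv_cancel₀ (by positivity)), inv_pow]
  have h1 : 1 < x ^ n := one_lt_pow₀ hx hn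
  have h2 : (x ^ n)⁻¹ < 1 := inv_lt_one_of_one_lt₀ h1
  have h3 : x ^ n * (x ^ n)⁻¹ = 1 := mul_inv_cancel₀ (by positivity)
  nlinarith

theorem eval_dickson_add_mul_sqrt_ne_two {d : ℕ} (hd : ∀ n : ℤ, (d : ℤ) ≠ n * n) {a b : ℤ}
    (hconj : 2 < a - b * √d) {n : ℕ} (hn : n ≠ 0) :
    (dickson 1 (1 : ℝ) n).eval (a + b * √d) ≠ 2 := by
  intro h
  have hsq : √d * √d = ((d : ℤ) : ℝ) := by simp
  have hsq' : -√d * -√d = ((d : ℤ) : ℝ) := by simp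
  have hconj_eval : aeval ((a : ℝ) - b * √d) (dickson 1 (1 : ℤ) n) = 2 := by
    have := Zsqrtd.aeval_lift_eq_of_aeval_lift_eq hd ⟨√d, hsq⟩ ⟨-√d, hsq'⟩ (dickson 1 1 n) ⟨a, b⟩
      2 (by simpa [aeval_dickson_one_one] using h)
    rwa [Zsqrtd.lift_apply_apply, mul_neg, ← sub_eq_add_neg] at this
  obtain ⟨x, hx, hxc⟩ := Real.exists_one_lt_add_inv_eq hconj
  have := two_lt_eval_dickson_add_inv hx hn
  rw [hxc, ← aeval_dickson_one_one, hconj_eval] at this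
  exact this.false

theorem Matrix.not_isOfFinOrder_of_dvd_charpoly {ι : Type*} [Fintype ι] [DecidableEq ι]
    (M : Matrix ι ι ℝ) {c : ℝ} (hM : X ^ 2 - C c * X + 1 ∣ M.charpoly)
    (hc : ∀ n ≠ 0, (dickson 1 (1 : ℝ) n).eval c ≠ 2) : ¬ IsOfFinOrder M := by
  rw [isOfFinOrder_iff_pow_eq_one]
  rintro ⟨n, hn, hMn⟩
  obtain ⟨z, hz0, hzc⟩ := Complex.exists_add_inv_eq c
  have hroot : ((algebraMap ℝ ℂ).mapMatrix M).charpoly.IsRoot z := by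
    obtain ⟨q, hq⟩ := hM
    have hquad : z ^ 2 - c * z + 1 = 0 := by
      rw [← hzc]
      field_simp
      ring
    rw [IsRoot, RingHom.mapMatrix_apply, charpoly_map, hq]
    simp [hquad]
  have hzn : z ^ n = 1 := by
    cases isEmpty_or_nonempty ι
    · simp [charpoly_isEmpty] at hroot
    have := spectrum.pow_mem_pow _ n (mem_spectrum_iff_isRoot_charpoly.mpr hroot)
    rwa [← map_pow, hMn, map_one, spectrum.one_eq, Set.mem_singleton_iff] at this
  apply hc n hn.ne'
  have := dickson_one_one_eval_add_inv z z⁻¹ (mul_inv_cancel₀ hz0) n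
  rw [hzc, inv_pow, hzn, ← aeval_dickson_one_one, ← Complex.coe_algebraMap, aeval_algebraMap_apply,
    aeval_dickson_one_one, inv_one, Complex.coe_algebraMap] at this
  exact_mod_cast this.trans one_add_one_eq_two

theorem eval_dickson_four_sub_two_mul_sqrt_two_ne_two {n : ℕ} (hn : n ≠ 0) :
    (dickson 1 (1 : ℝ) n).eval (4 - 2 * √2) ≠ 2 := by
  have hd : ∀ m : ℤ, ((2 : ℕ) : ℤ) ≠ m * m := fun m hm =>
    Int.sq_ne_two_mod_four m (by rw [← hm]; rfl)
  have hconj : (2 : ℝ) < ((4 : ℤ) : ℝ) - ((-2 : ℤ) : ℝ) * √((2 : ℕ) : ℝ) := by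
    push_cast
    nlinarith [Real.sqrt_nonneg 2]
  have := eval_dickson_add_mul_sqrt_ne_two hd hconj hn
  push_cast at this
  rwa [neg_mul, ← sub_eq_add_neg] at this

open Polynomial in
/-- Every `r ∈ SO(3)` whose characteristic polynomial is
`(x² − (4 − 2√2)x + 1)(x − 1)` has infinite order. -/
theorem infinite_order_of_charpoly
    (r : SO3)
    (hr : ((r : Matrix.unitaryGroup (Fin 3) ℝ) : Matrix (Fin 3) (Fin 3) ℝ).charpoly =
      (X ^ 2 - C (4 - 2 * Real.sqrt 2) * X + 1) * (X - 1)) :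
    ¬ IsOfFinOrder r := fun hfin =>
  Matrix.not_isOfFinOrder_of_dvd_charpoly _ (hr ▸ dvd_mul_right _ _)
    (fun _ => eval_dickson_four_sub_two_mul_sqrt_two_ne_two)
    ((unitary _).subtype.isOfFinOrder (SO3.subtype.isOfFinOrder hfin))
end

section
/- In G = SL(2,ℝ), let Γ = SL(2,ℤ) and let H be the subgroup of diagonal matrices in SL(2,ℝ). Then the set HΓ is closed in G, yet Γ ∩ H = {diag(1,1), diag(−1,−1)} is finite and hence is not a lattice in the noncompact group H. Thus for a non-normal closed subgroup H and a non-uniform lattice Γ, HΓ can be closed while H fails to be Γ-hereditary. -/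
open scoped Pointwise

open MeasureTheory in
/-- A lattice in a topological group: a discrete subgroup with finite invariant covolume. -/
def IsLattice {G : Type*} [Group G] [TopologicalSpace G] (Γ : Subgroup G) : Prop :=
  DiscreteTopology Γ ∧
    letI : MeasurableSpace (G ⧸ Γ) := borel (G ⧸ Γ)
    ∃ μ : Measure (G ⧸ Γ), SMulInvariantMeasure G (G ⧸ Γ) μ ∧ μ ≠ 0 ∧ IsFiniteMeasure μ

instance : TopologicalSpace (Matrix.SpecialLinearGroup (Fin 2) ℝ) :=
  inferInstanceAs (TopologicalSpace {A : Matrix (Fin 2) (Fin 2) ℝ // A.det = 1})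

/-- The subgroup of diagonal matrices in `SL(2,ℝ)`. -/
def DiagSL : Subgroup (Matrix.SpecialLinearGroup (Fin 2) ℝ) where
  carrier := {A | Matrix.IsDiag (A : Matrix (Fin 2) (Fin 2) ℝ)}
  one_mem' := by
    simpa using Matrix.isDiag_one
  mul_mem' := by
    intro a b ha hb
    simp only [Set.mem_setOf_eq, Matrix.SpecialLinearGroup.coe_mul] at *
    intro i j hij
    rw [Matrix.mul_apply]
    refine Finset.sum_eq_zero fun k _ => ?_
    rcases eq_or_ne i k with rfl | hik
    · rw [hb hij, mul_zero]
    · rw [ha hik, zero_mul]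
  inv_mem' := by
    intro a ha
    simp only [Set.mem_setOf_eq] at *
    rw [Matrix.SpecialLinearGroup.coe_inv, Matrix.adjugate_fin_two]
    intro i j hij
    fin_cases i <;> fin_cases j <;>
      simp_all [ha (show (0 : Fin 2) ≠ 1 by decide), ha (show (1 : Fin 2) ≠ 0 by decide)]

/-- The image of `SL(2,ℤ)` in `SL(2,ℝ)`. -/
def SL2Z : Subgroup (Matrix.SpecialLinearGroup (Fin 2) ℝ) :=
  (Matrix.SpecialLinearGroup.map (n := Fin 2) (Int.castRingHom ℝ)).range

/-- `-1` as an element of `SL(2,ℝ)`. -/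
def negOneSL : Matrix.SpecialLinearGroup (Fin 2) ℝ :=
  ⟨-1, by rw [Matrix.det_neg]; simp⟩

/-!
Write `A = {diag(eˢ, e⁻ˢ)}`; since `H = A · {±1}` and `-1 ∈ Γ`, `HΓ = AΓ`. Every row of a matrix in
`SL(2,ℤ)` has an entry of absolute value at least `1`, so if `diag(eˢ, e⁻ˢ) γ` stays in a bounded
set then so do `eˢ` and `e⁻ˢ`. Hence near any point `HΓ` agrees with `KΓ` for a compact `K ⊆ A`,
and `KΓ` is closed.

The continuous homomorphism `h ↦ log |h₀₀|` from `H` to `ℝ` kills `Γ ∩ H = {±1}`, so it descends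
to `H ⧸ (Γ ∩ H)`, where translation by `diag(e, e⁻¹)` shifts it by `1`. The fibres over the
intervals `[n, n + 1)` are then translates of each other, so an invariant measure gives them all
the same mass, and a finite one must vanish.
-/

open Topology MeasureTheory

theorem isClosed_mul_of_forall_nhds {G : Type*} [Group G] [TopologicalSpace G]
    [IsTopologicalGroup G] {S T : Set G} (hT : IsClosed T)
    (h : ∀ x, ∃ K ∈ 𝓝 x, ∃ L ⊆ S, IsCompact L ∧ K ∩ (S * T) ⊆ L * T) :
    IsClosed (S * T) := by
  refine isClosed_of_closure_subset fun x hx => ?_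
  obtain ⟨K, hK, L, hLS, hL, hKL⟩ := h x
  have hxK : x ∈ closure (K ∩ (S * T)) := by
    rw [mem_closure_iff_nhdsWithin_neBot, Set.inter_comm,
      nhdsWithin_inter_of_mem' (mem_nhdsWithin_of_mem_nhds hK)]
    exact mem_closure_iff_nhdsWithin_neBot.mp hx
  have hLT : x ∈ L * T := (hT.mul_left_of_isCompact hL).closure_subset (closure_mono hKL hxK)
  exact Set.mul_subset_mul_right hLS hLT

theorem MeasureTheory.Measure.eq_zero_of_smul_shift {G X : Type*} [SMul G X] [MeasurableSpace X]
    (μ : Measure X) [SMulInvariantMeasure G X μ] [IsFiniteMeasure μ] {f : X → ℝ}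
    (hf : Measurable f) {g : G} (hg : ∀ x, f (g • x) = f x + 1) : μ = 0 := by
  set S : ℤ → Set X := fun n => (fun x => ⌊f x⌋) ⁻¹' {n}
  have hS : ∀ n, MeasurableSet (S n) := fun n => hf.floor (measurableSet_singleton n)
  have hperiodic : Function.Periodic (fun n => μ (S n)) 1 := fun n => by
    have hshift : (fun x => g • x) ⁻¹' S (n + 1) = S n := by
      ext x
      simp [S, hg, Int.floor_add_one]
    simp only [← hshift, SMulInvariantMeasure.measure_preimage_smul g (hS (n + 1))]
  have huniv : μ Set.univ = ∑' _ : ℤ, μ (S 0) := by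
    have hcover : (⋃ n, S n) = Set.univ := Set.iUnion_eq_univ_iff.mpr fun x => ⟨_, rfl⟩
    rw [← hcover, measure_iUnion (pairwise_disjoint_fiber _) hS]
    exact tsum_congr fun n => by simpa using hperiodic.int_mul_eq n
  have hS0 : μ (S 0) = 0 := by
    by_contra h
    exact measure_ne_top μ Set.univ (huniv.trans (ENNReal.tsum_const_eq_top_of_ne_zero h))
  rw [← Measure.measure_univ_eq_zero, huniv, hS0, tsum_zero]

theorem not_isLattice_of_abs_character {H : Type*} [Group H] [TopologicalSpace H]
    (Γ : Subgroup H) (χ : H →* ℝ) (hχ : Continuous χ) (hΓ : ∀ γ ∈ Γ, |χ γ| = 1) {g : H}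
    (hg : |χ g| ≠ 1) : ¬ IsLattice Γ := by
  rintro ⟨-, μ, hμ, hμ0, hfin⟩
  let _ : MeasurableSpace (H ⧸ Γ) := borel _
  have : BorelSpace (H ⧸ Γ) := ⟨rfl⟩
  have hχ0 : ∀ a, χ a ≠ 0 := fun a => ((Group.isUnit a).map χ).ne_zero
  set ℓ : H → ℝ := fun a => Real.log |χ a| / Real.log |χ g|
  have hℓ_mul : ∀ a b, ℓ (a * b) = ℓ a + ℓ b := fun a b => by
    simp only [ℓ, map_mul, abs_mul, add_div,
      Real.log_mul (abs_ne_zero.mpr (hχ0 a)) (abs_ne_zero.mpr (hχ0 b))]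
  have hℓ_Γ : ∀ a, ∀ γ ∈ Γ, ℓ (a * γ) = ℓ a := fun a γ hγ => by
    rw [hℓ_mul, add_eq_left]
    simp only [ℓ, hΓ γ hγ, Real.log_one, zero_div]
  have hℓ_g : ℓ g = 1 :=
    div_self (Real.log_ne_zero_of_pos_of_ne_one (abs_pos.mpr (hχ0 g)) hg)
  have hℓ_cont : Continuous ℓ := (hχ.abs.log fun a => abs_ne_zero.mpr (hχ0 a)).div_const _
  have hℓ_rel : ∀ a b, QuotientGroup.leftRel Γ a b → ℓ a = ℓ b := fun a b hab => by
    simpa using (hℓ_Γ a _ (QuotientGroup.leftRel_apply.mp hab)).symm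
  set F : H ⧸ Γ → ℝ := fun q => Quotient.liftOn' q ℓ hℓ_rel
  have hF : Continuous F := hℓ_cont.quotient_liftOn' hℓ_rel
  have hshift : ∀ q : H ⧸ Γ, F (g • q) = F q + 1 := fun q => by
    induction q using QuotientGroup.induction_on with
    | H a => exact (hℓ_mul g a).trans (by rw [hℓ_g, add_comm]; rfl)
  exact hμ0 (Measure.eq_zero_of_smul_shift μ hF.measurable hshift)

theorem Matrix.IsDiag.det_fin_two {R : Type*} [CommRing R] {A : Matrix (Fin 2) (Fin 2) R}
    (h : A.IsDiag) : A.det = A 0 0 * A 1 1 := by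
  rw [Matrix.det_fin_two, h (show (0 : Fin 2) ≠ 1 by decide), zero_mul, sub_zero]

theorem Matrix.SpecialLinearGroup.exists_one_le_abs_apply (γ : Matrix.SpecialLinearGroup (Fin 2) ℤ)
    (i : Fin 2) : ∃ j, (1 : ℝ) ≤ |(γ i j : ℝ)| := by
  by_contra! hrow
  have hzero : ∀ j, γ i j = 0 := fun j =>
    Int.abs_lt_one_iff.mp (by exact_mod_cast hrow j)
  have hdet : γ 0 0 * γ 1 1 - γ 0 1 * γ 1 0 = 1 := (Matrix.det_fin_two _).symm.trans γ.2
  fin_cases i <;> simp_all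

-- Instance search does not see through the topology declared above to Mathlib's instance.
instance : IsTopologicalGroup (Matrix.SpecialLinearGroup (Fin 2) ℝ) :=
  Matrix.SpecialLinearGroup.topologicalGroup

theorem isClosed_SL2Z : IsClosed (SL2Z : Set (Matrix.SpecialLinearGroup (Fin 2) ℝ)) :=
  (Real.isClosedEmbedding_intCast.specialLinearGroup_map (f := Int.castRingHom ℝ)).isClosed_range

noncomputable def diagExp (s : ℝ) : Matrix.SpecialLinearGroup (Fin 2) ℝ :=
  ⟨Matrix.diagonal ![Real.exp s, Real.exp (-s)], by
    simp [Matrix.det_diagonal, ← Real.exp_add]⟩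

theorem coe_diagExp (s : ℝ) :
    (diagExp s : Matrix (Fin 2) (Fin 2) ℝ) = Matrix.diagonal ![Real.exp s, Real.exp (-s)] :=
  rfl

theorem coe_negOneSL : (negOneSL : Matrix (Fin 2) (Fin 2) ℝ) = -1 :=
  rfl

theorem continuous_diagExp : Continuous diagExp :=
  (Continuous.matrix_diagonal (by fun_prop)).subtype_mk _

theorem diagExp_mem_DiagSL (s : ℝ) : diagExp s ∈ DiagSL :=
  Matrix.isDiag_diagonal _

theorem diagExp_mul_apply (s : ℝ) (A : Matrix.SpecialLinearGroup (Fin 2) ℝ) (i j : Fin 2) :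
    (diagExp s * A) i j = ![Real.exp s, Real.exp (-s)] i * A i j :=
  Matrix.diagonal_mul _ _ _ _

theorem negOneSL_mem_SL2Z : negOneSL ∈ SL2Z :=
  ⟨-1, by ext i j; fin_cases i <;> fin_cases j <;> simp [coe_negOneSL]⟩

theorem negOneSL_mem_DiagSL : negOneSL ∈ DiagSL :=
  (Matrix.isDiag_one).neg

theorem exists_diagExp_of_mem_DiagSL {h : Matrix.SpecialLinearGroup (Fin 2) ℝ} (hh : h ∈ DiagSL) :
    ∃ s, h = diagExp s ∨ h = diagExp s * negOneSL := by
  have hdiag : Matrix.IsDiag (h : Matrix (Fin 2) (Fin 2) ℝ) := hh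
  have h01 : h 0 1 = 0 := hdiag (by decide)
  have h10 : h 1 0 = 0 := hdiag (by decide)
  have hdet : h 0 0 * h 1 1 = 1 := hdiag.det_fin_two.symm.trans h.2
  have h00 : h 0 0 ≠ 0 := left_ne_zero_of_mul_eq_one hdet
  have h11 : h 1 1 = (h 0 0)⁻¹ := eq_inv_of_mul_eq_one_right hdet
  obtain ⟨s, hs⟩ : ∃ s, Real.exp s = |h 0 0| := ⟨_, Real.exp_log (abs_pos.mpr h00)⟩
  refine ⟨s, ?_⟩
  rcases h00.lt_or_gt with hneg | hpos
  · right
    ext i j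
    fin_cases i <;> fin_cases j <;>
      simp [coe_diagExp, coe_negOneSL, Real.exp_neg, hs, abs_of_neg hneg, h01, h10, h11]
  · left
    ext i j
    fin_cases i <;> fin_cases j <;>
      simp [coe_diagExp, Real.exp_neg, hs, abs_of_pos hpos, h01, h10, h11]

theorem DiagSL_mul_SL2Z :
    (DiagSL : Set (Matrix.SpecialLinearGroup (Fin 2) ℝ)) * SL2Z = Set.range diagExp * SL2Z := by
  refine subset_antisymm ?_ (Set.mul_subset_mul_right (Set.range_subset_iff.mpr diagExp_mem_DiagSL))
  rintro _ ⟨h, hh, γ, hγ, rfl⟩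
  obtain ⟨s, rfl | rfl⟩ := exists_diagExp_of_mem_DiagSL hh
  · exact Set.mul_mem_mul ⟨s, rfl⟩ hγ
  · simpa only [mul_assoc] using
      Set.mul_mem_mul (Set.mem_range_self s) (SL2Z.mul_mem negOneSL_mem_SL2Z hγ)

theorem SL2Z_inf_DiagSL :
    ((SL2Z ⊓ DiagSL : Subgroup _) : Set (Matrix.SpecialLinearGroup (Fin 2) ℝ)) =
      {1, negOneSL} := by
  ext x
  simp only [SetLike.mem_coe, Subgroup.mem_inf, Set.mem_insert_iff, Set.mem_singleton_iff]
  constructor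
  · rintro ⟨⟨γ, rfl⟩, hdiag⟩
    have hγ : Matrix.IsDiag (γ : Matrix (Fin 2) (Fin 2) ℤ) := fun i j hij => by
      have : Matrix.IsDiag ((Matrix.SpecialLinearGroup.map (Int.castRingHom ℝ) γ :
        Matrix.SpecialLinearGroup (Fin 2) ℝ) : Matrix (Fin 2) (Fin 2) ℝ) := hdiag
      simpa using this hij
    have hdet : γ 0 0 * γ 1 1 = 1 := hγ.det_fin_two.symm.trans γ.2
    have h01 : γ 0 1 = 0 := hγ (by decide)
    have h10 : γ 1 0 = 0 := hγ (by decide)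
    rcases Int.eq_one_or_neg_one_of_mul_eq_one' hdet with ⟨h00, h11⟩ | ⟨h00, h11⟩
    · left
      ext i j
      fin_cases i <;> fin_cases j <;> simp [h00, h01, h10, h11]
    · right
      ext i j
      fin_cases i <;> fin_cases j <;> simp [coe_negOneSL, h00, h01, h10, h11]
  · rintro (rfl | rfl)
    · exact ⟨one_mem _, one_mem _⟩
    · exact ⟨negOneSL_mem_SL2Z, negOneSL_mem_DiagSL⟩

theorem exp_le_abs_diagExp_mul_apply (s : ℝ) {γ : Matrix.SpecialLinearGroup (Fin 2) ℝ}
    (hγ : γ ∈ SL2Z) (i : Fin 2) :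
    ∃ j, ![Real.exp s, Real.exp (-s)] i ≤ |(diagExp s * γ) i j| := by
  obtain ⟨γ, rfl⟩ := hγ
  obtain ⟨j, hj⟩ := γ.exists_one_le_abs_apply i
  have hpos : 0 < ![Real.exp s, Real.exp (-s)] i := by fin_cases i <;> simp [Real.exp_pos]
  refine ⟨j, ?_⟩
  rw [diagExp_mul_apply, abs_mul, abs_of_pos hpos]
  exact le_mul_of_one_le_right hpos.le (by simpa using hj)

theorem isClosed_DiagSL_mul_SL2Z :
    IsClosed ((DiagSL : Set (Matrix.SpecialLinearGroup (Fin 2) ℝ)) * (SL2Z : Set _)) := by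
  rw [DiagSL_mul_SL2Z]
  refine isClosed_mul_of_forall_nhds isClosed_SL2Z fun x => ?_
  let entries : Matrix.SpecialLinearGroup (Fin 2) ℝ → Fin 2 → Fin 2 → ℝ :=
    fun A => Matrix.of.symm (A : Matrix (Fin 2) (Fin 2) ℝ)
  have hentries : Continuous entries := continuous_subtype_val
  set R := ‖entries x‖ + 1
  have hR : 0 < R := by positivity
  refine ⟨{A | ‖entries A‖ < R}, (isOpen_lt hentries.norm continuous_const).mem_nhds
      (lt_add_one ‖entries x‖),
    diagExp '' Set.Icc (-Real.log R) (Real.log R), Set.image_subset_range _ _,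
    isCompact_Icc.image continuous_diagExp, ?_⟩
  rintro _ ⟨hA, _, ⟨s, rfl⟩, γ, hγ, rfl⟩
  have hbound : ∀ i, ![Real.exp s, Real.exp (-s)] i < R := fun i => by
    obtain ⟨j, hj⟩ := exp_le_abs_diagExp_mul_apply s hγ i
    calc _ ≤ |(diagExp s * γ) i j| := hj
      _ ≤ ‖entries (diagExp s * γ)‖ := (norm_le_pi_norm (entries (diagExp s * γ) i) j).trans
          (norm_le_pi_norm _ i)
      _ < R := hA
  have hs : s ∈ Set.Icc (-Real.log R) (Real.log R) := by
    constructor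
    · exact neg_le.mp ((Real.le_log_iff_exp_le hR).mpr (by simpa using (hbound 1).le))
    · exact (Real.le_log_iff_exp_le hR).mpr (by simpa using (hbound 0).le)
  exact Set.mul_mem_mul ⟨s, hs, rfl⟩ hγ

theorem not_isCompact_DiagSL :
    ¬ IsCompact (DiagSL : Set (Matrix.SpecialLinearGroup (Fin 2) ℝ)) := by
  intro hc
  have hcont : Continuous fun A : Matrix.SpecialLinearGroup (Fin 2) ℝ => A 0 0 := by fun_prop
  obtain ⟨c, hc⟩ := (hc.image hcont).bddAbove
  have hexp : Real.exp c ≤ c := hc ⟨diagExp c, diagExp_mem_DiagSL c, by simp [coe_diagExp]⟩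
  linarith [Real.add_one_le_exp c]

def topLeftEntry : DiagSL →* ℝ where
  toFun h := (h : Matrix.SpecialLinearGroup (Fin 2) ℝ) 0 0
  map_one' := by simp
  map_mul' a b := by
    simp [Matrix.mul_apply, Fin.sum_univ_two, a.2 (show (0 : Fin 2) ≠ 1 by decide)]

theorem continuous_topLeftEntry : Continuous topLeftEntry := by
  show Continuous fun h : DiagSL => (h : Matrix.SpecialLinearGroup (Fin 2) ℝ) 0 0
  fun_prop

theorem not_isLattice_SL2Z_subgroupOf_DiagSL : ¬ IsLattice (SL2Z.subgroupOf DiagSL) := by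
  refine not_isLattice_of_abs_character _ topLeftEntry continuous_topLeftEntry (fun γ hγ => ?_)
    (g := ⟨diagExp 1, diagExp_mem_DiagSL 1⟩) ?_
  · have hγ' : (γ : Matrix.SpecialLinearGroup (Fin 2) ℝ) ∈ ({1, negOneSL} : Set _) := by
      rw [← SL2Z_inf_DiagSL]
      exact Subgroup.mem_inf.mpr ⟨Subgroup.mem_subgroupOf.mp hγ, γ.2⟩
    obtain h | h : _ = 1 ∨ _ = negOneSL := hγ'
    all_goals simp [topLeftEntry, h, coe_negOneSL]
  · simp [topLeftEntry, coe_diagExp, (Real.one_lt_exp_iff.mpr one_pos).ne']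

/-- In `G = SL(2,ℝ)` with `Γ = SL(2,ℤ)` and `H` the diagonal subgroup, the set `HΓ` is
closed, yet `Γ ∩ H = {±1}` is finite, hence not a lattice in the noncompact group `H`:
for a non-normal closed subgroup and a non-uniform lattice, `HΓ` can be closed while `H`
fails to be `Γ`-hereditary. -/
theorem diagonal_not_hereditary_in_SL2 :
    IsClosed ((DiagSL : Set (Matrix.SpecialLinearGroup (Fin 2) ℝ)) * (SL2Z : Set _)) ∧
      ((SL2Z ⊓ DiagSL : Subgroup _) : Set (Matrix.SpecialLinearGroup (Fin 2) ℝ)) =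
        {1, negOneSL} ∧
      Set.Finite ((SL2Z ⊓ DiagSL : Subgroup _) : Set (Matrix.SpecialLinearGroup (Fin 2) ℝ)) ∧
      ¬ IsCompact (DiagSL : Set (Matrix.SpecialLinearGroup (Fin 2) ℝ)) ∧
      ¬ IsLattice (SL2Z.subgroupOf DiagSL) :=
  ⟨isClosed_DiagSL_mul_SL2Z, SL2Z_inf_DiagSL, SL2Z_inf_DiagSL ▸ Set.toFinite _,
    not_isCompact_DiagSL, not_isLattice_SL2Z_subgroupOf_DiagSL⟩
end
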